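/- Suppose λ ∈ ℝ satisfies λ ≥ F_x + C_x for every x ∈ S and Σ_{x∈S} y_x(λ) = 1. Then y(λ) maximizes the objective g over the feasible set: for every z ∈ ℝ^S with z_x ≥ ε for all x ∈ S and Σ_{x∈S} z_x = 1, one has Σ_{x∈S} (C_x·log z_x + F_x·z_x) ≤ Σ_{x∈S} (C_x·log y_x(λ) + F_x·y_x(λ)). -/

import Mathlib

/-!
Each summand `C_x log t + F_x t` is concave in `t`, so it lies below its tangent at `y_x(λ)`,
whose slope is `C_x / y_x + F_x`. The choice of `y(λ)` makes this slope equal to `λ` where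
`y_x > ε` and at most `λ` where `y_x = ε`, i.e. the KKT conditions hold with multiplier `λ`.
Summing the tangent bounds, the multiplier term vanishes because `z` and `y(λ)` have the same
total mass, and the boundary terms have the right sign because `z_x ≥ ε`.
-/

open Finset

theorem Real.mul_log_le_mul_log_add_div_mul_sub {c y z : ℝ} (hc : 0 ≤ c) (hy : 0 < y)
    (hz : 0 < z) : c * Real.log z ≤ c * Real.log y + c / y * (z - y) := by
  have hlog : Real.log z - Real.log y ≤ (z - y) / y := by
    calc Real.log z - Real.log y = Real.log (z / y) := (Real.log_div hz.ne' hy.ne').symm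
      _ ≤ z / y - 1 := Real.log_le_sub_one_of_pos (div_pos hz hy)
      _ = (z - y) / y := by field_simp
  have := mul_le_mul_of_nonneg_left hlog hc
  rw [mul_div_assoc'] at this
  rw [div_mul_eq_mul_div]
  linarith

theorem Finset.sum_le_sum_of_tangent_le {ι : Type*} (s : Finset ι) (φ : ι → ℝ → ℝ)
    (d y z : ι → ℝ) (lam : ℝ)
    (htangent : ∀ x ∈ s, φ x (z x) ≤ φ x (y x) + d x * (z x - y x))
    (hkkt : ∀ x ∈ s, (d x - lam) * (z x - y x) ≤ 0)
    (hsum : ∑ x ∈ s, z x = ∑ x ∈ s, y x) :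
    ∑ x ∈ s, φ x (z x) ≤ ∑ x ∈ s, φ x (y x) := by
  have hmultiplier : ∑ x ∈ s, lam * (z x - y x) = 0 := by
    rw [← mul_sum, sum_sub_distrib, hsum, sub_self, mul_zero]
  have hslack : ∑ x ∈ s, d x * (z x - y x) ≤ 0 := by
    have := sum_nonpos hkkt
    simp only [sub_mul, sum_sub_distrib] at this
    linarith
  calc ∑ x ∈ s, φ x (z x) ≤ ∑ x ∈ s, (φ x (y x) + d x * (z x - y x)) := sum_le_sum htangent
    _ = ∑ x ∈ s, φ x (y x) + ∑ x ∈ s, d x * (z x - y x) := sum_add_distrib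
    _ ≤ ∑ x ∈ s, φ x (y x) := by linarith

theorem le_of_eq_ite_max {c ε lam f y : ℝ}
    (hy : y = if c = 0 then ε else max (c / (lam - f)) ε) : ε ≤ y := by
  split_ifs at hy <;> simp [hy]

theorem kkt_of_eq_ite_max {c ε lam f y z : ℝ} (hc : 0 ≤ c) (hε : 0 < ε) (hlam : f + c ≤ lam)
    (hy : y = if c = 0 then ε else max (c / (lam - f)) ε) (hz : ε ≤ z) :
    (c / y + f - lam) * (z - y) ≤ 0 := by
  suffices h : (y = ε ∧ c / ε + f ≤ lam) ∨ c / y + f = lam by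
    rcases h with ⟨rfl, hslope⟩ | hslope
    · exact mul_nonpos_of_nonpos_of_nonneg (by linarith) (by linarith)
    · simp [hslope]
  by_cases hc0 : c = 0
  · simp only [hc0, if_true] at hy
    exact Or.inl ⟨hy, by simpa [hc0] using hlam⟩
  have hgap : 0 < lam - f := by linarith [lt_of_le_of_ne hc (Ne.symm hc0)]
  simp only [hc0, if_false] at hy
  rcases le_total ε (c / (lam - f)) with hinterior | hboundary
  · right
    rw [hy, max_eq_left hinterior, div_div_eq_mul_div, mul_div_cancel_left₀ _ hc0]
    ring
  · left
    refine ⟨hy.trans (max_eq_right hboundary), ?_⟩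
    have : c / ε ≤ lam - f := (div_le_iff₀' hε).mpr ((div_le_iff₀ hgap).mp hboundary)
    linarith

theorem kl_min_step_optimal_general {ι : Type*} [Fintype ι]
    (C F : ι → ℝ) (hC : ∀ x, 0 ≤ C x)
    (ε : ℝ) (hε : 0 < ε)
    (lam : ℝ) (hlam : ∀ x, F x + C x ≤ lam)
    (y : ι → ℝ) (hy : ∀ x, y x = if C x = 0 then ε else max (C x / (lam - F x)) ε)
    (hysum : ∑ x, y x = 1) :
    ∀ z : ι → ℝ, (∀ x, ε ≤ z x) → (∑ x, z x = 1) →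
      ∑ x, (C x * Real.log (z x) + F x * z x)
        ≤ ∑ x, (C x * Real.log (y x) + F x * y x) := by
  intro z hz hzsum
  have hypos : ∀ x, 0 < y x := fun x => hε.trans_le (le_of_eq_ite_max (hy x))
  have hzpos : ∀ x, 0 < z x := fun x => hε.trans_le (hz x)
  refine sum_le_sum_of_tangent_le univ (fun x t => C x * Real.log t + F x * t)
    (fun x => C x / y x + F x) y z lam (fun x _ => ?_)
    (fun x _ => kkt_of_eq_ite_max (hC x) hε (hlam x) (hy x) (hz x)) (hzsum.trans hysum.symm)
  have := Real.mul_log_le_mul_log_add_div_mul_sub (hC x) (hypos x) (hzpos x)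
  linarith

/-- **Lemma 5 of the paper, optimality part.** If `λ ≥ F_x + C_x` for every
`x` and the vector `y(λ)` given by `y_x(λ) = ε` when `C_x = 0` and
`y_x(λ) = max(C_x/(λ − F_x), ε)` when `C_x > 0` sums to `1`, then `y(λ)` maximizes
`Σ_x (C_x·log y_x + F_x·y_x)` over the feasible set
`{z : z_x ≥ ε for all x, Σ_x z_x = 1}`. -/
theorem kl_min_step_optimal {ι : Type*} [Fintype ι] [Nonempty ι]
    (C F : ι → ℝ) (hC : ∀ x, 0 ≤ C x)
    (ε : ℝ) (hε : 0 < ε) (hkε : (Fintype.card ι : ℝ) * ε ≤ 1)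
    (lam : ℝ) (hlam : ∀ x, F x + C x ≤ lam)
    (y : ι → ℝ) (hy : ∀ x, y x = if C x = 0 then ε else max (C x / (lam - F x)) ε)
    (hysum : ∑ x, y x = 1) :
    ∀ z : ι → ℝ, (∀ x, ε ≤ z x) → (∑ x, z x = 1) →
      ∑ x, (C x * Real.log (z x) + F x * z x)
        ≤ ∑ x, (C x * Real.log (y x) + F x * y x) :=
  kl_min_step_optimal_general C F hC ε hε lam hlam y hy hysum
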